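/- In ℂ³ ⊗ ℂ³ ⊗ ℂ³, consider the family of fully product vectors v(α) = (1, α + α³, α² + α⁶) ⊗ (1, α³, α⁶) ⊗ (1, α, α²) for α ∈ ℂ. The orthogonal complement of the span of {v(α) : α ∈ ℂ} is a genuinely entangled subspace of dimension 12. -/

import Mathlib

/-!
Each coordinate of `v(α)` is the value at `α` of a polynomial `P (i, j, k) = xᵢ yⱼ zₖ` with real
coefficients, so `ψ` is orthogonal to every `v(α)` exactly when the polynomial `∑ ψₚ Pₚ` vanishes.
If `ψ = a ⊗ g` across some cut, this polynomial factors as `(∑ aᵢ uᵢ) (∑ g_q w_q)`, where `u` is one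
of `x, y, z` and `w` the products of the other two. Both families are linearly independent (their
degrees, or for `xᵢ yⱼ` their orders of vanishing at `0`, are pairwise distinct), so `a = 0` or
`g = 0`. The `Pₚ` span the `15`-dimensional space of polynomials of degree `< 15`, so the orthogonal
complement has dimension `27 - 15 = 12`.
-/

noncomputable section

abbrev TriH (d₁ d₂ d₃ : ℕ) := EuclideanSpace ℂ (Fin d₁ × Fin d₂ × Fin d₃)

def BiprodA {d₁ d₂ d₃ : ℕ} (ψ : TriH d₁ d₂ d₃) : Prop :=
  ∃ (a : Fin d₁ → ℂ) (g : Fin d₂ × Fin d₃ → ℂ), ∀ i j k, ψ (i, j, k) = a i * g (j, k)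

def BiprodB {d₁ d₂ d₃ : ℕ} (ψ : TriH d₁ d₂ d₃) : Prop :=
  ∃ (b : Fin d₂ → ℂ) (g : Fin d₁ × Fin d₃ → ℂ), ∀ i j k, ψ (i, j, k) = b j * g (i, k)

def BiprodC {d₁ d₂ d₃ : ℕ} (ψ : TriH d₁ d₂ d₃) : Prop :=
  ∃ (c : Fin d₃ → ℂ) (g : Fin d₁ × Fin d₂ → ℂ), ∀ i j k, ψ (i, j, k) = c k * g (i, j)

def IsGME3 {d₁ d₂ d₃ : ℕ} (ψ : TriH d₁ d₂ d₃) : Prop :=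
  ψ ≠ 0 ∧ ¬ BiprodA ψ ∧ ¬ BiprodB ψ ∧ ¬ BiprodC ψ

def IsGES3 {d₁ d₂ d₃ : ℕ} (V : Submodule ℂ (TriH d₁ d₂ d₃)) : Prop :=
  ∀ ψ ∈ V, ψ ≠ 0 → IsGME3 ψ

/-- The family of fully product vectors
`v(α) = (1, α + α³, α² + α⁶) ⊗ (1, α³, α⁶) ⊗ (1, α, α²)` in `ℂ³ ⊗ ℂ³ ⊗ ℂ³`. -/
def qutritCurve (α : ℂ) : TriH 3 3 3 :=
  WithLp.toLp 2 (fun p : Fin 3 × Fin 3 × Fin 3 => ![(1 : ℂ), α + α ^ 3, α ^ 2 + α ^ 6] p.1 *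
    ![(1 : ℂ), α ^ 3, α ^ 6] p.2.1 * ![(1 : ℂ), α, α ^ 2] p.2.2)

open Polynomial Function Finset

namespace Polynomial

theorem linearIndependent_of_coeff_pivot {R ι α : Type*} [Ring R] [NoZeroDivisors R]
    [Fintype ι] [LinearOrder α] {u : ι → R[X]} (e : ι → ℕ) (σ : ι → α)
    (hpivot : ∀ i, (u i).coeff (e i) ≠ 0)
    (htriangular : ∀ i j, j ≠ i → (u j).coeff (e i) ≠ 0 → σ i < σ j) :
    LinearIndependent R u := by
  classical
  rw [Fintype.linearIndependent_iff]
  by_contra! ⟨c, hc, i₀, hi₀⟩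
  obtain ⟨i, hi, hmax⟩ := (univ.filter (c · ≠ 0)).exists_max_image σ ⟨i₀, by simpa using hi₀⟩
  have hcoeff := congrArg (coeff · (e i)) hc
  simp only [finsetSum_coeff, coeff_smul, smul_eq_mul, coeff_zero] at hcoeff
  rw [Finset.sum_eq_single i] at hcoeff
  · exact mul_ne_zero (by simpa using hi) (hpivot i) hcoeff
  · intro j _ hji
    by_cases hcj : c j = 0
    · simp [hcj]
    · by_contra hne
      have := hmax j (by simpa using hcj)
      exact (htriangular i j hji (right_ne_zero_of_mul hne)).not_ge this
  · simp

theorem linearIndependent_of_injective_natDegree {R ι : Type*} [Ring R] [NoZeroDivisors R]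
    [Fintype ι] {u : ι → R[X]} (hu : ∀ i, u i ≠ 0) (hinj : Injective (natDegree ∘ u)) :
    LinearIndependent R u :=
  linearIndependent_of_coeff_pivot (natDegree ∘ u) (natDegree ∘ u)
    (fun i => by simpa using hu i) fun i j hji hne =>
      (le_natDegree_of_ne_zero hne).lt_of_ne fun h => hji (hinj h.symm)

theorem linearIndependent_of_injective_natTrailingDegree {R ι : Type*} [Ring R]
    [NoZeroDivisors R] [Fintype ι] {u : ι → R[X]} (hu : ∀ i, u i ≠ 0)
    (hinj : Injective (natTrailingDegree ∘ u)) : LinearIndependent R u :=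
  linearIndependent_of_coeff_pivot (natTrailingDegree ∘ u)
    (OrderDual.toDual ∘ natTrailingDegree ∘ u)
    (fun i => by simpa using hu i) fun i j hji hne =>
      (natTrailingDegree_le_of_ne_zero hne).lt_of_ne fun h => hji (hinj h)

end Polynomial

theorem eq_zero_or_eq_zero_of_linearCombination_mul_eq_zero {K A ι κ : Type*} [Field K]
    [CommRing A] [NoZeroDivisors A] [Algebra K A] [Fintype ι] [Fintype κ]
    {u : ι → A} {w : κ → A} (hu : LinearIndependent K u) (hw : LinearIndependent K w)
    {a : ι → K} {g : κ → K}
    (h : Fintype.linearCombination K u a * Fintype.linearCombination K w g = 0) :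
    a = 0 ∨ g = 0 :=
  (mul_eq_zero.mp h).imp (fun h => funext (Fintype.linearIndependent_iff.mp hu a h))
    fun h => funext (Fintype.linearIndependent_iff.mp hw g h)

section Tripartite

variable {d₁ d₂ d₃ : ℕ} {A : Type*} [CommRing A] [Algebra ℂ A]
  {x : Fin d₁ → A} {y : Fin d₂ → A} {z : Fin d₃ → A} {ψ : TriH d₁ d₂ d₃}

variable (x y z) in
def tripleProduct (p : Fin d₁ × Fin d₂ × Fin d₃) : A := x p.1 * y p.2.1 * z p.2.2

theorem linearCombination_tripleProduct_of_forall_eq_mul_A {a : Fin d₁ → ℂ}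
    {g : Fin d₂ × Fin d₃ → ℂ} (h : ∀ i j k, ψ (i, j, k) = a i * g (j, k)) :
    Fintype.linearCombination ℂ (tripleProduct x y z) ψ.ofLp =
      Fintype.linearCombination ℂ x a * Fintype.linearCombination ℂ (fun q => y q.1 * z q.2) g := by
  simp only [Fintype.linearCombination_apply, Finset.sum_mul_sum]
  simp only [tripleProduct, Fintype.sum_prod_type, h, smul_mul_smul_comm, mul_assoc]

theorem linearCombination_tripleProduct_of_forall_eq_mul_B {b : Fin d₂ → ℂ}
    {g : Fin d₁ × Fin d₃ → ℂ} (h : ∀ i j k, ψ (i, j, k) = b j * g (i, k)) :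
    Fintype.linearCombination ℂ (tripleProduct x y z) ψ.ofLp =
      Fintype.linearCombination ℂ y b * Fintype.linearCombination ℂ (fun q => x q.1 * z q.2) g := by
  simp only [Fintype.linearCombination_apply, Finset.sum_mul_sum]
  simp only [tripleProduct, Fintype.sum_prod_type, h]
  rw [Finset.sum_comm]
  simp only [smul_mul_smul_comm, mul_assoc, mul_left_comm (x _)]

theorem linearCombination_tripleProduct_of_forall_eq_mul_C {c : Fin d₃ → ℂ}
    {g : Fin d₁ × Fin d₂ → ℂ} (h : ∀ i j k, ψ (i, j, k) = c k * g (i, j)) :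
    Fintype.linearCombination ℂ (tripleProduct x y z) ψ.ofLp =
      Fintype.linearCombination ℂ z c * Fintype.linearCombination ℂ (fun q => x q.1 * y q.2) g := by
  simp only [Fintype.linearCombination_apply, Finset.sum_mul_sum]
  simp only [tripleProduct, Fintype.sum_prod_type, h]
  refine (Finset.sum_congr rfl fun i _ => Finset.sum_comm).trans (Finset.sum_comm.trans ?_)
  simp only [smul_mul_smul_comm, mul_comm (z _)]

variable [NoZeroDivisors A]

theorem not_biprodA_of_linearCombination_eq_zero
    (hψ : Fintype.linearCombination ℂ (tripleProduct x y z) ψ.ofLp = 0) (hx : LinearIndependent ℂ x)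
    (hyz : LinearIndependent ℂ fun q : Fin d₂ × Fin d₃ => y q.1 * z q.2) (hψ₀ : ψ ≠ 0) :
    ¬ BiprodA ψ := by
  rintro ⟨a, g, h⟩
  rw [linearCombination_tripleProduct_of_forall_eq_mul_A h] at hψ
  refine hψ₀ (PiLp.ext fun ⟨i, j, k⟩ => ?_)
  rcases eq_zero_or_eq_zero_of_linearCombination_mul_eq_zero hx hyz hψ with rfl | rfl <;> simp [h]

theorem not_biprodB_of_linearCombination_eq_zero
    (hψ : Fintype.linearCombination ℂ (tripleProduct x y z) ψ.ofLp = 0) (hy : LinearIndependent ℂ y)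
    (hxz : LinearIndependent ℂ fun q : Fin d₁ × Fin d₃ => x q.1 * z q.2) (hψ₀ : ψ ≠ 0) :
    ¬ BiprodB ψ := by
  rintro ⟨b, g, h⟩
  rw [linearCombination_tripleProduct_of_forall_eq_mul_B h] at hψ
  refine hψ₀ (PiLp.ext fun ⟨i, j, k⟩ => ?_)
  rcases eq_zero_or_eq_zero_of_linearCombination_mul_eq_zero hy hxz hψ with rfl | rfl <;> simp [h]

theorem not_biprodC_of_linearCombination_eq_zero
    (hψ : Fintype.linearCombination ℂ (tripleProduct x y z) ψ.ofLp = 0) (hz : LinearIndependent ℂ z)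
    (hxy : LinearIndependent ℂ fun q : Fin d₁ × Fin d₂ => x q.1 * y q.2) (hψ₀ : ψ ≠ 0) :
    ¬ BiprodC ψ := by
  rintro ⟨c, g, h⟩
  rw [linearCombination_tripleProduct_of_forall_eq_mul_C h] at hψ
  refine hψ₀ (PiLp.ext fun ⟨i, j, k⟩ => ?_)
  rcases eq_zero_or_eq_zero_of_linearCombination_mul_eq_zero hz hxy hψ with rfl | rfl <;> simp [h]

end Tripartite

section PolynomialCurve

variable {ι : Type*} [Fintype ι]

def polyCurve (P : ι → ℂ[X]) (α : ℂ) : EuclideanSpace ℂ ι :=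
  WithLp.toLp 2 fun i => (P i).eval α

theorem inner_polyCurve {P : ι → ℂ[X]} (hP : ∀ i, (P i).map (starRingEnd ℂ) = P i) (α : ℂ)
    (ψ : EuclideanSpace ℂ ι) :
    inner ℂ (polyCurve P α) ψ = (Fintype.linearCombination ℂ P ψ.ofLp).eval (starRingEnd ℂ α) := by
  simp only [PiLp.inner_apply, RCLike.inner_apply, polyCurve, Fintype.linearCombination_apply,
    eval_finsetSum, eval_smul, smul_eq_mul]
  refine Finset.sum_congr rfl fun i _ => ?_
  rw [← eval₂_at_apply, ← eval_map, hP, mul_comm]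

theorem mem_orthogonal_span_range_polyCurve_iff {P : ι → ℂ[X]}
    (hP : ∀ i, (P i).map (starRingEnd ℂ) = P i) {ψ : EuclideanSpace ℂ ι} :
    ψ ∈ (Submodule.span ℂ (Set.range (polyCurve P)))ᗮ ↔
      Fintype.linearCombination ℂ P ψ.ofLp = 0 := by
  rw [← Submodule.span_singleton_le_iff_mem, ← Submodule.isOrtho_iff_le, Submodule.isOrtho_comm,
    Submodule.isOrtho_span]
  simp only [Set.forall_mem_range, Set.mem_singleton_iff, forall_eq, inner_polyCurve hP]
  refine ⟨fun h => Polynomial.funext fun r => ?_, fun h α => by simp [h]⟩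
  simpa using h (starRingEnd ℂ r)

theorem finrank_orthogonal_span_range_polyCurve_add_finrank {P : ι → ℂ[X]}
    (hP : ∀ i, (P i).map (starRingEnd ℂ) = P i) :
    Module.finrank ℂ (Submodule.span ℂ (Set.range (polyCurve P)))ᗮ +
      Module.finrank ℂ (Submodule.span ℂ (Set.range P)) = Fintype.card ι := by
  set f := Fintype.linearCombination ℂ P ∘ₗ (WithLp.linearEquiv 2 ℂ (ι → ℂ)).toLinearMap
  have hker : (Submodule.span ℂ (Set.range (polyCurve P)))ᗮ = LinearMap.ker f := by
    ext ψ
    exact mem_orthogonal_span_range_polyCurve_iff hP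
  have hrange : LinearMap.range f = Submodule.span ℂ (Set.range P) := by
    rw [LinearMap.range_comp_of_range_eq_top _ (LinearEquiv.range _),
      Fintype.range_linearCombination]
  rw [hker, ← hrange, add_comm, LinearMap.finrank_range_add_finrank_ker, finrank_euclideanSpace]

end PolynomialCurve

def qutritFactorA : Fin 3 → ℂ[X] := ![1, X + X ^ 3, X ^ 2 + X ^ 6]
def qutritFactorB (j : Fin 3) : ℂ[X] := X ^ (3 * (j : ℕ))
def qutritFactorC (k : Fin 3) : ℂ[X] := X ^ (k : ℕ)

theorem monic_qutritFactorA (i : Fin 3) : (qutritFactorA i).Monic := by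
  fin_cases i <;> simp [qutritFactorA] <;> monicity!

theorem natDegree_qutritFactorA (i : Fin 3) : (qutritFactorA i).natDegree = 3 * i := by
  fin_cases i <;> simp [qutritFactorA] <;> compute_degree!

theorem natTrailingDegree_qutritFactorA (i : Fin 3) : (qutritFactorA i).natTrailingDegree = i := by
  refine le_antisymm (natTrailingDegree_le_of_ne_zero ?_)
    (le_natTrailingDegree (monic_qutritFactorA i).ne_zero fun m hm => ?_) <;>
  fin_cases i <;> dsimp at * <;> (try interval_cases m) <;>
  simp [qutritFactorA, coeff_X, coeff_X_pow]

abbrev qutritPoly : Fin 3 × Fin 3 × Fin 3 → ℂ[X] :=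
  tripleProduct qutritFactorA qutritFactorB qutritFactorC

theorem qutritCurve_eq_polyCurve : qutritCurve = polyCurve qutritPoly := by
  funext α
  ext ⟨i, j, k⟩
  simp only [qutritCurve, polyCurve, tripleProduct, eval_mul]
  fin_cases i <;> fin_cases j <;> fin_cases k <;> simp [qutritFactorA, qutritFactorB, qutritFactorC]

theorem map_conj_qutritPoly (p : Fin 3 × Fin 3 × Fin 3) :
    (qutritPoly p).map (starRingEnd ℂ) = qutritPoly p := by
  obtain ⟨i, j, k⟩ := p
  fin_cases i <;>
    simp [tripleProduct, qutritFactorA, qutritFactorB, qutritFactorC, Polynomial.map_mul]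

theorem linearIndependent_qutritFactorA : LinearIndependent ℂ qutritFactorA :=
  linearIndependent_of_injective_natDegree (fun i => (monic_qutritFactorA i).ne_zero)
    fun i j h => Fin.ext (by simp only [comp_apply, natDegree_qutritFactorA] at h; omega)

theorem linearIndependent_qutritFactorB : LinearIndependent ℂ qutritFactorB :=
  linearIndependent_of_injective_natDegree (fun j => by simp [qutritFactorB])
    fun i j h => Fin.ext (by simp only [comp_apply, qutritFactorB, natDegree_X_pow] at h; omega)

theorem linearIndependent_qutritFactorC : LinearIndependent ℂ qutritFactorC :=
  linearIndependent_of_injective_natDegree (fun j => by simp [qutritFactorC])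
    fun i j h => Fin.ext (by simpa [qutritFactorC] using h)

theorem linearIndependent_qutritFactorB_mul_C :
    LinearIndependent ℂ fun q : Fin 3 × Fin 3 => qutritFactorB q.1 * qutritFactorC q.2 :=
  linearIndependent_of_injective_natDegree (fun q => by simp [qutritFactorB, qutritFactorC])
    fun p q h => by
      simp only [comp_apply, qutritFactorB, qutritFactorC, ← pow_add, natDegree_X_pow] at h
      ext <;> omega

theorem linearIndependent_qutritFactorA_mul_C :
    LinearIndependent ℂ fun q : Fin 3 × Fin 3 => qutritFactorA q.1 * qutritFactorC q.2 :=
  linearIndependent_of_injective_natDegree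
    (fun q => ((monic_qutritFactorA q.1).mul (monic_X_pow _)).ne_zero)
    fun p q h => by
      simp only [comp_apply, qutritFactorC, (monic_qutritFactorA _).natDegree_mul (monic_X_pow _),
        natDegree_qutritFactorA, natDegree_X_pow] at h
      ext <;> omega

theorem linearIndependent_qutritFactorA_mul_B :
    LinearIndependent ℂ fun q : Fin 3 × Fin 3 => qutritFactorA q.1 * qutritFactorB q.2 :=
  linearIndependent_of_injective_natTrailingDegree
    (fun q => ((monic_qutritFactorA q.1).mul (monic_X_pow _)).ne_zero)
    fun p q h => by
      simp only [comp_apply, qutritFactorB, natTrailingDegree_qutritFactorA,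
        natTrailingDegree_mul_X_pow (monic_qutritFactorA _).ne_zero] at h
      ext <;> omega

theorem natDegree_qutritPoly (p : Fin 3 × Fin 3 × Fin 3) :
    (qutritPoly p).natDegree = 3 * p.1 + 3 * p.2.1 + p.2.2 := by
  simp only [tripleProduct, qutritFactorB, qutritFactorC,
    ((monic_qutritFactorA _).mul (monic_X_pow _)).natDegree_mul (monic_X_pow _),
    (monic_qutritFactorA _).natDegree_mul (monic_X_pow _), natDegree_qutritFactorA, natDegree_X_pow]

theorem finrank_span_range_qutritPoly :
    Module.finrank ℂ (Submodule.span ℂ (Set.range qutritPoly)) = 15 := by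
  apply le_antisymm
  · calc _ ≤ Module.finrank ℂ (degreeLT ℂ 15) := by
          refine Submodule.finrank_mono (Submodule.span_le.2 ?_)
          rintro _ ⟨p, rfl⟩
          rw [SetLike.mem_coe, mem_degreeLT]
          refine degree_le_natDegree.trans_lt (Nat.cast_lt.2 ?_)
          rw [natDegree_qutritPoly]
          omega
      _ = 15 := by simp [(degreeLTEquiv ℂ 15).finrank_eq]
  -- the products with `i = 0` or `j = 2` have the pairwise distinct degrees `0, …, 14`
  · have hS : LinearIndependent ℂ
        fun s : {p : Fin 3 × Fin 3 × Fin 3 // (p.1 : ℕ) = 0 ∨ (p.2.1 : ℕ) = 2} => qutritPoly s :=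
      linearIndependent_of_injective_natDegree
        (fun s => ((monic_qutritFactorA _).mul (monic_X_pow _) |>.mul (monic_X_pow _)).ne_zero)
        fun s t h => by
          obtain ⟨⟨i, j, k⟩, hs⟩ := s
          obtain ⟨⟨i', j', k'⟩, ht⟩ := t
          simp only [comp_apply, natDegree_qutritPoly] at h
          dsimp only at hs ht
          simp only [Subtype.mk.injEq, Prod.mk.injEq, Fin.ext_iff]
          omega
    have := Module.Finite.span_of_finite ℂ (Set.finite_range qutritPoly)
    calc 15 = Fintype.card {p : Fin 3 × Fin 3 × Fin 3 // (p.1 : ℕ) = 0 ∨ (p.2.1 : ℕ) = 2} := by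
          decide
      _ = Module.finrank ℂ (Submodule.span ℂ (Set.range _)) := (finrank_span_eq_card hS).symm
      _ ≤ _ := Submodule.finrank_mono
          (Submodule.span_mono (Set.range_comp_subset_range Subtype.val qutritPoly))

/-- the orthogonal complement of `span{v(α) : α ∈ ℂ}` is a genuinely
entangled subspace of `ℂ³ ⊗ ℂ³ ⊗ ℂ³` of dimension `12`. -/
theorem qutrit_GES_of_dimension_twelve :
    IsGES3 ((Submodule.span ℂ (Set.range qutritCurve))ᗮ) ∧
    Module.finrank ℂ ((Submodule.span ℂ (Set.range qutritCurve))ᗮ : Submodule ℂ (TriH 3 3 3)) = 12 := by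
  rw [qutritCurve_eq_polyCurve]
  refine ⟨fun ψ hψ hψ₀ => ?_, ?_⟩
  · have h := (mem_orthogonal_span_range_polyCurve_iff map_conj_qutritPoly).mp hψ
    exact ⟨hψ₀,
      not_biprodA_of_linearCombination_eq_zero h linearIndependent_qutritFactorA
        linearIndependent_qutritFactorB_mul_C hψ₀,
      not_biprodB_of_linearCombination_eq_zero h linearIndependent_qutritFactorB
        linearIndependent_qutritFactorA_mul_C hψ₀,
      not_biprodC_of_linearCombination_eq_zero h linearIndependent_qutritFactorC
        linearIndependent_qutritFactorA_mul_B hψ₀⟩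
  · have h := finrank_orthogonal_span_range_polyCurve_add_finrank map_conj_qutritPoly
    rw [finrank_span_range_qutritPoly] at h
    simp only [Fintype.card_prod, Fintype.card_fin] at h
    exact Nat.add_right_cancel (h.trans (by norm_num : 3 * (3 * 3) = 12 + 15))
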